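/- If R is a B-complete TRS and Ṙ (same left-hand sides as R, with →R/B-normalized right-hand sides, one representative per right-B-equivalent-variant class) is Church–Rosser modulo B, then every normal form of R̈ is a normal form of Ṙ, where R̈ = {ℓ→r ∈ Ṙ | ℓ ∈ NF(Ṙ∖{ℓ→r})}. -/

import Mathlib

/-- First-order terms over a signature `F` with natural-number variables. -/
inductive Tm (F : Type) : Type
  | var : Nat → Tm F
  | fn  : F → List (Tm F) → Tm F

namespace Tm

variable {F : Type}

mutual
def subst (σ : Nat → Tm F) : Tm F → Tm F
  | .var n => σ n
  | .fn f ts => .fn f (substList σ ts)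
def substList (σ : Nat → Tm F) : List (Tm F) → List (Tm F)
  | [] => []
  | t :: ts => subst σ t :: substList σ ts
end

mutual
def varsList : Tm F → List Nat
  | .var n => [n]
  | .fn _ ts => varsListL ts
def varsListL : List (Tm F) → List Nat
  | [] => []
  | t :: ts => varsList t ++ varsListL ts
end

/-- The set of variables of a term. -/
def vars (t : Tm F) : Set Nat := {n | n ∈ varsList t}

/-- A term is linear if no variable occurs more than once. -/
def Linear (t : Tm F) : Prop := (varsList t).Nodup

/-- The subterm at a given position (if the position exists). -/
def subtermAt : Tm F → List Nat → Option (Tm F)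
  | t, [] => some t
  | .var _, _ :: _ => none
  | .fn _ ts, i :: p =>
    match ts[i]? with
    | some u => subtermAt u p
    | none => none
  termination_by t p => p.length

/-- Replacement of the subterm at a given position. -/
def replaceAt : Tm F → List Nat → Tm F → Option (Tm F)
  | _, [], s => some s
  | .var _, _ :: _, _ => none
  | .fn f ts, i :: p, s =>
    match ts[i]? with
    | some u => (replaceAt u p s).map fun u' => .fn f (ts.set i u')
    | none => none
  termination_by t p _ => p.length

end Tm

open Tm

/-- A term rewrite system (or equational system): a set of pairs of terms. -/
abbrev TRS (F : Type) := Set (Tm F × Tm F)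

/-- Well-formedness of the rules: left-hand sides are not variables and
variables of right-hand sides occur on the left. -/
def IsTRS {F : Type} (R : TRS F) : Prop :=
  ∀ p ∈ R, (∀ n, p.1 ≠ .var n) ∧ vars p.2 ⊆ vars p.1

def LeftLinear {F : Type} (R : TRS F) : Prop := ∀ p ∈ R, Linear p.1

/-- One-step rewrite relation of a set of rules (closed under contexts and
substitutions). -/
def Rew {F : Type} (R : TRS F) (s t : Tm F) : Prop :=
  ∃ p l r σ, (l, r) ∈ R ∧ subtermAt s p = some (subst σ l) ∧
    replaceAt s p (subst σ r) = some t

/-- Normal forms. -/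
def NF {A : Type} (r : A → A → Prop) (a : A) : Prop := ∀ b, ¬ r a b

/-- The equational theory `∼B` generated by an ES `B`. -/
def simE {F : Type} (B : TRS F) : Tm F → Tm F → Prop :=
  Relation.EqvGen (Rew B)

/-- Rewriting modulo: `∼B · →R · ∼B`. -/
def RewMod {F : Type} (R B : TRS F) (s t : Tm F) : Prop :=
  ∃ s' t', simE B s s' ∧ Rew R s' t' ∧ simE B t' t

def Terminating {F : Type} (R : TRS F) : Prop :=
  WellFounded (fun a b => Rew R b a)

def TerminatingMod {F : Type} (R B : TRS F) : Prop :=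
  WellFounded (fun a b => RewMod R B b a)

/-- Conversion modulo `B`: arbitrary sequences of `→R`, `←R` and `∼B` steps. -/
def ConvMod {F : Type} (R B : TRS F) : Tm F → Tm F → Prop :=
  Relation.ReflTransGen (fun a b => Rew R a b ∨ Rew R b a ∨ simE B a b)

/-- Joinability modulo `B` using the plain rewrite relation:
`→R* · ∼B · ←R*`. -/
def JoinMod {F : Type} (R B : TRS F) (s t : Tm F) : Prop :=
  ∃ u v, Relation.ReflTransGen (Rew R) s u ∧ simE B u v ∧
    Relation.ReflTransGen (Rew R) t v

def ChurchRosserMod {F : Type} (R B : TRS F) : Prop :=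
  ∀ s t, ConvMod R B s t → JoinMod R B s t

def Joinable {F : Type} (R : TRS F) (s t : Tm F) : Prop :=
  ∃ v, Relation.ReflTransGen (Rew R) s v ∧ Relation.ReflTransGen (Rew R) t v

def Confluent {F : Type} (R : TRS F) : Prop :=
  ∀ s t u, Relation.ReflTransGen (Rew R) s t → Relation.ReflTransGen (Rew R) s u →
    Joinable R t u

/-- Renaming a term by a bijection on variables. -/
def rename {F : Type} (ρ : Nat ≃ Nat) (t : Tm F) : Tm F :=
  subst (fun n => .var (ρ n)) t

def VariantTm {F : Type} (s t : Tm F) : Prop := ∃ ρ : Nat ≃ Nat, rename ρ s = t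

def VariantRule {F : Type} (p q : Tm F × Tm F) : Prop :=
  ∃ ρ : Nat ≃ Nat, rename ρ p.1 = q.1 ∧ rename ρ p.2 = q.2

def Unifies {F : Type} (σ : Nat → Tm F) (s t : Tm F) : Prop := subst σ s = subst σ t

/-- Most general unifier. -/
def IsMGU {F : Type} (σ : Nat → Tm F) (s t : Tm F) : Prop :=
  Unifies σ s t ∧ ∀ τ, Unifies τ s t → ∃ δ, ∀ n, τ n = subst δ (σ n)

/-- `CriticalPeak R₁ R₂ t p s u` : `t ←R₁[p] s →R₂[ε] u` is a critical peak
obtained from an overlap of variable-disjoint variants of rules of `R₁`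
(inner rule) and `R₂` (root rule). -/
def CriticalPeak {F : Type} (R₁ R₂ : TRS F) (t : Tm F) (p : List Nat) (s u : Tm F) :
    Prop :=
  ∃ l₁ r₁ l₂ r₂ σ,
    (∃ q ∈ R₁, VariantRule q (l₁, r₁)) ∧
    (∃ q ∈ R₂, VariantRule q (l₂, r₂)) ∧
    (vars l₁ ∪ vars r₁) ∩ (vars l₂ ∪ vars r₂) = ∅ ∧
    (∃ f ts, subtermAt l₂ p = some (.fn f ts) ∧ IsMGU σ l₁ (.fn f ts)) ∧
    (p = [] → ¬ VariantRule (l₁, r₁) (l₂, r₂)) ∧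
    s = subst σ l₂ ∧
    replaceAt s p (subst σ r₁) = some t ∧
    u = subst σ r₂

/-- The set of critical pairs between `R₁` and `R₂`. -/
def CP {F : Type} (R₁ R₂ : TRS F) : Set (Tm F × Tm F) :=
  {tu | ∃ p s, CriticalPeak R₁ R₂ tu.1 p s tu.2}

/-- A critical peak `t ←[p] s →[ε] u` is prime (w.r.t. `R`) if all proper
subterms of `s|p` are in normal form w.r.t. `→R`. -/
def PrimeAt {F : Type} (R : TRS F) (s : Tm F) (p : List Nat) : Prop :=
  ∀ q v, q ≠ [] → subtermAt s (p ++ q) = some v → NF (Rew R) v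

/-- Prime critical pairs of a TRS. -/
def PCP {F : Type} (R : TRS F) : Set (Tm F × Tm F) :=
  {tu | ∃ p s, CriticalPeak R R tu.1 p s tu.2 ∧ PrimeAt R s p}

/-- `E ∪ E⁻¹`. -/
def sympm {F : Type} (E : TRS F) : TRS F :=
  E ∪ {q | ∃ p ∈ E, q = (p.2, p.1)}

/-- Prime critical pairs between `R` and `B^±` (in both directions), where
primality is always checked with respect to `→R`. -/
def PCPpm {F : Type} (R B : TRS F) : Set (Tm F × Tm F) :=
  {tu | ∃ p s, (CriticalPeak R (sympm B) tu.1 p s tu.2 ∨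
                CriticalPeak (sympm B) R tu.1 p s tu.2) ∧ PrimeAt R s p}

/-- `s` encompasses `t`: some subterm of `s` is an instance of `t`. -/
def Encompass {F : Type} (s t : Tm F) : Prop :=
  ∃ p w σ, subtermAt s p = some w ∧ w = subst σ t

/-- The strict part of encompassment: `⊳ = ⊵ ∖ ≐`. -/
def StrictEnc {F : Type} (s t : Tm F) : Prop :=
  Encompass s t ∧ ¬ VariantTm s t

/-- Two rules are right-`B`-equivalent variants. -/
def REV {F : Type} (B : TRS F) (p q : Tm F × Tm F) : Prop :=
  ∃ ρ : Nat ≃ Nat, rename ρ p.1 = q.1 ∧ simE B (rename ρ p.2) q.2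

/-- Left-reducedness: left-hand sides are irreducible by the other rules. -/
def LeftReduced {F : Type} (R : TRS F) : Prop :=
  ∀ p ∈ R, NF (Rew (R \ {p})) p.1

/-- Right-`B`-reducedness: right-hand sides are `→R/B`-normal forms. -/
def RightBReduced {F : Type} (R B : TRS F) : Prop :=
  ∀ p ∈ R, NF (RewMod R B) p.2

def CompleteMod {F : Type} (R B : TRS F) : Prop :=
  TerminatingMod R B ∧ ChurchRosserMod R B

def CanonicalMod {F : Type} (R B : TRS F) : Prop :=
  CompleteMod R B ∧ LeftReduced R ∧ RightBReduced R B

/-- Normalization equivalence modulo `B`: `→R^! · ∼B = →S^! · ∼B`. -/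
def NormEquivMod {F : Type} (R S B : TRS F) : Prop :=
  ∀ s t, (∃ u, Relation.ReflTransGen (Rew R) s u ∧ NF (Rew R) u ∧ simE B u t) ↔
         (∃ u, Relation.ReflTransGen (Rew S) s u ∧ NF (Rew S) u ∧ simE B u t)

/-- Conversion equivalence modulo `B`: `↔*_{R∪B} = ↔*_{S∪B}`. -/
def ConvEquivMod {F : Type} (R S B : TRS F) : Prop :=
  ∀ s t, Relation.EqvGen (fun a b => Rew R a b ∨ Rew B a b) s t ↔
         Relation.EqvGen (fun a b => Rew S a b ∨ Rew B a b) s t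

/-- `Rdot` is a valid version `Ṙ` of `R`: its rules are rules of `R` whose
right-hand sides have been replaced by `→R/B`-normal forms, every rule of `R`
is represented up to right-`B`-equivalent variants, and `Rdot` is free of
distinct right-`B`-equivalent variants. -/
def IsRdot {F : Type} (R B Rdot : TRS F) : Prop :=
  (∀ q ∈ Rdot, ∃ r, (q.1, r) ∈ R ∧ Relation.ReflTransGen (RewMod R B) r q.2 ∧
    NF (RewMod R B) q.2) ∧
  (∀ p ∈ R, ∃ r', Relation.ReflTransGen (RewMod R B) p.2 r' ∧
    NF (RewMod R B) r' ∧ ∃ q ∈ Rdot, REV B (p.1, r') q) ∧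
  (∀ q ∈ Rdot, ∀ q' ∈ Rdot, REV B q q' → q = q')

namespace StmtAux

open Tm

variable {F : Type}

/-! ### basic substitution lemmas -/

theorem substList_eq_map (σ : Nat → Tm F) (ts : List (Tm F)) :
    substList σ ts = ts.map (subst σ) := by
  induction ts with
  | nil => simp [substList]
  | cons t ts ih => simp [substList, ih]

mutual
theorem subst_var : (t : Tm F) → subst Tm.var t = t
  | .var n => rfl
  | .fn f ts => by rw [subst, substList_var ts]
theorem substList_var : (ts : List (Tm F)) → substList Tm.var ts = ts
  | [] => rfl
  | t :: ts => by rw [substList, subst_var t, substList_var ts]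
end

mutual
theorem subst_subst (σ τ : Nat → Tm F) : (t : Tm F) →
    subst σ (subst τ t) = subst (fun n => subst σ (τ n)) t
  | .var n => rfl
  | .fn f ts => by rw [subst, subst, subst, substList_subst]
theorem substList_subst (σ τ : Nat → Tm F) : (ts : List (Tm F)) →
    substList σ (substList τ ts) = substList (fun n => subst σ (τ n)) ts
  | [] => rfl
  | t :: ts => by rw [substList, substList, substList, subst_subst, substList_subst]
end

mutual
theorem subst_congr (σ τ : Nat → Tm F) : (t : Tm F) →
    (∀ n ∈ varsList t, σ n = τ n) → subst σ t = subst τ t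
  | .var n, h => h n (by simp [varsList])
  | .fn f ts, h => by
      rw [subst, subst, substList_congr σ τ ts (by simpa [varsList] using h)]
theorem substList_congr (σ τ : Nat → Tm F) : (ts : List (Tm F)) →
    (∀ n ∈ varsListL ts, σ n = τ n) → substList σ ts = substList τ ts
  | [], _ => rfl
  | t :: ts, h => by
      rw [substList, substList,
        subst_congr σ τ t (fun n hn => h n (by simp [varsListL, hn])),
        substList_congr σ τ ts (fun n hn => h n (by simp [varsListL, hn]))]
end

/-! ### sizes -/

mutual
def sz : Tm F → Nat
  | .var _ => 1
  | .fn _ ts => 2 + szL ts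
def szL : List (Tm F) → Nat
  | [] => 0
  | t :: ts => sz t + szL ts
end

mutual
theorem sz_pos : (t : Tm F) → 1 ≤ sz t
  | .var _ => le_refl _
  | .fn f ts => by rw [sz]; omega
theorem szL_ge : (ts : List (Tm F)) → ts.length ≤ szL ts
  | [] => le_refl _
  | t :: ts => by
      have := sz_pos t; have := szL_ge ts
      simp only [szL, List.length_cons]; omega
end

mutual
theorem sz_subst (σ : Nat → Tm F) : (t : Tm F) →
    sz (subst σ t) + (varsList t).length
      = sz t + ((varsList t).map fun n => sz (σ n)).sum
  | .var n => by simp [subst, varsList, sz]; omega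
  | .fn f ts => by
      simp only [subst, varsList, sz]
      have := szL_subst σ ts
      omega
theorem szL_subst (σ : Nat → Tm F) : (ts : List (Tm F)) →
    szL (substList σ ts) + (varsListL ts).length
      = szL ts + ((varsListL ts).map fun n => sz (σ n)).sum
  | [] => rfl
  | t :: ts => by
      simp only [substList, varsListL, szL, List.length_append, List.map_append,
        List.sum_append]
      have := sz_subst σ t
      have := szL_subst σ ts
      omega
end

theorem sz_subst_le (σ : Nat → Tm F) (t : Tm F) : sz t ≤ sz (subst σ t) := by
  have h := sz_subst σ t
  have h2 : (varsList t).length ≤ ((varsList t).map fun n => sz (σ n)).sum := by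
    calc (varsList t).length = ((varsList t).map fun n => sz (σ n)).length := by simp
    _ ≤ _ := List.length_le_sum_of_one_le _ (by
        intro x hx
        simp only [List.mem_map] at hx
        obtain ⟨n, -, rfl⟩ := hx
        exact sz_pos _)
  omega

theorem mem_varsList_sz_one (σ : Nat → Tm F) (t : Tm F)
    (h : sz (subst σ t) = sz t) : ∀ n ∈ varsList t, sz (σ n) = 1 := by
  have h1 := sz_subst σ t
  have h2 : ((varsList t).map fun n => sz (σ n)).sum = (varsList t).length := by
    simp only [h] at h1; omega
  intro n hn
  by_contra hne
  have hge : 2 ≤ sz (σ n) := by have := sz_pos (σ n); omega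
  -- split list at n
  obtain ⟨l1, l2, heq⟩ := List.append_of_mem hn
  rw [heq] at h2
  have hlen : ∀ l : List Nat, l.length ≤ (l.map fun n => sz (σ n)).sum := by
    intro l
    calc l.length = (l.map fun n => sz (σ n)).length := by simp
    _ ≤ _ := List.length_le_sum_of_one_le _ (by
        intro x hx
        simp only [List.mem_map] at hx
        obtain ⟨m, -, rfl⟩ := hx
        exact sz_pos _)
  have := hlen l1; have := hlen l2
  simp only [List.map_append, List.sum_append, List.length_append, List.map_cons,
    List.sum_cons, List.length_cons] at h2
  omega

theorem sz_eq_one_iff (t : Tm F) : sz t = 1 ↔ ∃ n, t = .var n := by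
  constructor
  · intro h
    cases t with
    | var n => exact ⟨n, rfl⟩
    | fn f ts => rw [sz] at h; omega
  · rintro ⟨n, rfl⟩; rfl

end StmtAux
namespace StmtAux
open Tm
variable {F : Type}

/-! ### subtermAt / replaceAt lemmas -/

theorem szL_getElem {ts : List (Tm F)} {i : Nat} {u : Tm F} (h : ts[i]? = some u) :
    sz u ≤ szL ts := by
  induction ts generalizing i with
  | nil => simp at h
  | cons t ts ih =>
    cases i with
    | zero => simp at h; subst h; simp only [szL]; omega
    | succ i =>
      simp only [List.getElem?_cons_succ] at h
      have := ih h; simp [szL]; omega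

theorem sz_subtermAt : ∀ {s : Tm F} {p : List Nat} {w : Tm F},
    subtermAt s p = some w → sz w + p.length ≤ sz s := by
  intro s p
  induction p generalizing s with
  | nil =>
    intro w h
    rw [subtermAt] at h
    injection h with h; subst h; simp
  | cons i p ih =>
    intro w h
    cases s with
    | var n => exact absurd h (by rw [subtermAt]; simp)
    | fn f ts =>
      rw [subtermAt] at h
      cases hts : ts[i]? with
      | none => rw [hts] at h; simp at h
      | some u =>
        rw [hts] at h; simp only at h
        have h1 := ih h
        have h2 := szL_getElem hts
        simp only [List.length_cons, sz]
        omega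

theorem subtermAt_append : ∀ {s u w : Tm F} {p q : List Nat},
    subtermAt s p = some u → subtermAt u q = some w → subtermAt s (p ++ q) = some w := by
  intro s u w p
  induction p generalizing s with
  | nil =>
    intro q h1 h2
    rw [subtermAt] at h1
    injection h1 with h1; subst h1; simpa using h2
  | cons i p ih =>
    intro q h1 h2
    cases s with
    | var n => exact absurd h1 (by rw [subtermAt]; simp)
    | fn f ts =>
      rw [subtermAt] at h1
      cases hts : ts[i]? with
      | none => rw [hts] at h1; simp at h1
      | some v =>
        rw [hts] at h1; simp only at h1
        rw [List.cons_append, subtermAt, hts]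
        exact ih h1 h2

theorem subtermAt_subst {σ : Nat → Tm F} : ∀ {s w : Tm F} {p : List Nat},
    subtermAt s p = some w → subtermAt (subst σ s) p = some (subst σ w) := by
  intro s w p
  induction p generalizing s with
  | nil =>
    intro h
    rw [subtermAt] at h
    injection h with h; subst h; rw [subtermAt]
  | cons i p ih =>
    intro h
    cases s with
    | var n => exact absurd h (by rw [subtermAt]; simp)
    | fn f ts =>
      rw [subtermAt] at h
      cases hts : ts[i]? with
      | none => rw [hts] at h; simp at h
      | some u =>
        rw [hts] at h; simp only at h
        rw [subst, subtermAt, substList_eq_map, List.getElem?_map, hts]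
        exact ih h

theorem replaceAt_subst {σ : Nat → Tm F} : ∀ {s w u : Tm F} {p : List Nat},
    replaceAt s p w = some u →
    replaceAt (subst σ s) p (subst σ w) = some (subst σ u) := by
  intro s w u p
  induction p generalizing s u with
  | nil =>
    intro h
    rw [replaceAt] at h
    injection h with h; subst h; rw [replaceAt]
  | cons i p ih =>
    intro h
    cases s with
    | var n => exact absurd h (by rw [replaceAt]; simp)
    | fn f ts =>
      rw [replaceAt] at h
      cases hts : ts[i]? with
      | none => rw [hts] at h; simp at h
      | some v =>
        rw [hts] at h
        simp only [Option.map_eq_some_iff] at h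
        obtain ⟨v', hv', rfl⟩ := h
        rw [subst, replaceAt, substList_eq_map, List.getElem?_map, hts]
        simp only [Option.map_some, ih hv', subst, substList_eq_map, List.map_set]

theorem replaceAt_isSome : ∀ {s w : Tm F} {p : List Nat} (v : Tm F),
    subtermAt s p = some w → ∃ u, replaceAt s p v = some u := by
  intro s w p
  induction p generalizing s with
  | nil => intro v _; exact ⟨v, by rw [replaceAt]⟩
  | cons i p ih =>
    intro v h
    cases s with
    | var n => exact absurd h (by rw [subtermAt]; simp)
    | fn f ts =>
      rw [subtermAt] at h
      cases hts : ts[i]? with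
      | none => rw [hts] at h; simp at h
      | some u =>
        rw [hts] at h; simp only at h
        obtain ⟨u', hu'⟩ := ih v h
        exact ⟨.fn f (ts.set i u'), by rw [replaceAt, hts]; simp [hu']⟩

/-! ### variables under variable substitutions -/

mutual
theorem varsList_subst_map (σ : Nat → Tm F) (g : Nat → Nat) : (t : Tm F) →
    (∀ n ∈ varsList t, σ n = .var (g n)) →
    varsList (subst σ t) = (varsList t).map g
  | .var n, h => by
      rw [subst, h n (by simp [varsList])]; simp [varsList]
  | .fn f ts, h => by
      rw [subst, varsList, varsList, varsListL_subst_map σ g ts (by simpa [varsList] using h)]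
theorem varsListL_subst_map (σ : Nat → Tm F) (g : Nat → Nat) : (ts : List (Tm F)) →
    (∀ n ∈ varsListL ts, σ n = .var (g n)) →
    varsListL (substList σ ts) = (varsListL ts).map g
  | [], _ => rfl
  | t :: ts, h => by
      rw [substList, varsListL, varsListL, List.map_append,
        varsList_subst_map σ g t (fun n hn => h n (by simp [varsListL, hn])),
        varsListL_subst_map σ g ts (fun n hn => h n (by simp [varsListL, hn]))]
end

mutual
theorem varsList_length_le_sz : (t : Tm F) → (varsList t).length ≤ sz t
  | .var _ => le_refl _
  | .fn f ts => by
      rw [varsList, sz]; have := varsListL_length_le_szL ts; omega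
theorem varsListL_length_le_szL : (ts : List (Tm F)) → (varsListL ts).length ≤ szL ts
  | [] => le_refl _
  | t :: ts => by
      rw [varsListL, szL, List.length_append]
      have := varsList_length_le_sz t; have := varsListL_length_le_szL ts; omega
end

/-! ### the measure -/

def vcount (t : Tm F) : Nat := (varsList t).toFinset.card

theorem vcount_le_sz (t : Tm F) : vcount t ≤ sz t :=
  le_trans (List.toFinset_card_le _) (varsList_length_le_sz t)

def mu (t : Tm F) : Nat := sz t * sz t + (sz t - vcount t)

/-! ### permutation extension -/

theorem exists_perm_extend (A : Finset ℕ) (g : ℕ → ℕ) (hinj : Set.InjOn g ↑A) :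
    ∃ ρ : ℕ ≃ ℕ, ∀ n ∈ A, ρ n = g n := by
  classical
  have hfin : (↑A : Set ℕ).Finite := A.finite_toSet
  let e1 : ↥(↑A : Set ℕ) ≃ ↥(g '' ↑A) := Set.BijOn.equiv g hinj.bijOn_image
  have he1 : ∀ x : ↥(↑A : Set ℕ), (e1 x : ℕ) = g x := fun x => rfl
  have h1 : Infinite ↥((↑A : Set ℕ)ᶜ) := hfin.infinite_compl.to_subtype
  have h2 : Infinite ↥((g '' ↑A)ᶜ) := (hfin.image g).infinite_compl.to_subtype
  letI := Nat.Subtype.denumerable ((↑A : Set ℕ)ᶜ)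
  letI := Nat.Subtype.denumerable ((g '' ↑A)ᶜ)
  let e2 : ↥((↑A : Set ℕ)ᶜ) ≃ ↥((g '' ↑A)ᶜ) :=
    (Denumerable.eqv _).trans (Denumerable.eqv _).symm
  refine ⟨(Equiv.Set.sumCompl (↑A : Set ℕ)).symm.trans
    ((e1.sumCongr e2).trans (Equiv.Set.sumCompl (g '' ↑A))), ?_⟩
  intro n hn
  have hn' : n ∈ (↑A : Set ℕ) := by simpa using hn
  simp only [Equiv.trans_apply, Equiv.Set.sumCompl_symm_apply_of_mem hn',
    Equiv.sumCongr_apply, Sum.map_inl]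
  rw [Equiv.Set.sumCompl_apply_inl]
  exact he1 ⟨n, hn'⟩

/-! ### the encompassment dichotomy -/

theorem enc_dichotomy {s t : Tm F} {p : List Nat} {σ : Nat → Tm F}
    (h : subtermAt s p = some (subst σ t)) :
    mu t < mu s ∨ ∃ ρ : ℕ ≃ ℕ, rename ρ t = s := by
  classical
  have hsz1 : sz (subst σ t) + p.length ≤ sz s := sz_subtermAt h
  have hsz2 : sz t ≤ sz (subst σ t) := sz_subst_le σ t
  rcases lt_or_ge (sz t) (sz s) with hlt | hge
  · left
    have h1 : mu t ≤ sz t * sz t + sz t := by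
      unfold mu; omega
    have h2 : sz s * sz s ≤ mu s := by unfold mu; omega
    have h3 : 1 ≤ sz t := sz_pos t
    nlinarith
  · -- sz t = sz s, p = [], s = subst σ t
    have heq : sz (subst σ t) = sz s := by omega
    have hp : p = [] := by
      cases p with
      | nil => rfl
      | cons i p =>
        exfalso
        simp only [List.length_cons] at hsz1
        omega
    subst hp
    rw [subtermAt] at h
    injection h with hs
    have heq2 : sz (subst σ t) = sz t := by omega
    have hv1 := mem_varsList_sz_one σ t heq2
    have hgex : ∀ n, ∃ m, n ∈ varsList t → σ n = .var m := by
      intro n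
      by_cases hn : n ∈ varsList t
      · obtain ⟨m, hm⟩ := (sz_eq_one_iff (σ n)).1 (hv1 n hn)
        exact ⟨m, fun _ => hm⟩
      · exact ⟨0, fun hc => absurd hc hn⟩
    choose g hg using hgex
    have hmap : varsList s = (varsList t).map g := by
      rw [hs]; exact varsList_subst_map σ g t hg
    have himg : (varsList s).toFinset = (varsList t).toFinset.image g := by
      rw [hmap]; ext x; simp
    have hle : vcount s ≤ vcount t := by
      rw [vcount, vcount, himg]; exact Finset.card_image_le
    have hS : sz t = sz s := by omega
    rcases lt_or_eq_of_le hle with hlt | hveq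
    · left
      have hvt : vcount t ≤ sz t := vcount_le_sz t
      unfold mu; rw [hS]; rw [hS] at hvt; omega
    · right
      have hinj : Set.InjOn g ↑(varsList t).toFinset :=
        Finset.injOn_of_card_image_eq (by rw [← himg, ← vcount, ← vcount, hveq])
      obtain ⟨ρ, hρ⟩ := exists_perm_extend (varsList t).toFinset g hinj
      refine ⟨ρ, ?_⟩
      rw [hs, rename]
      exact subst_congr _ _ t fun n hn => by
        rw [hg n hn, hρ n (List.mem_toFinset.2 hn)]

end StmtAux
namespace StmtAux
open Tm
variable {F : Type}

theorem rename_symm_rename (ρ : ℕ ≃ ℕ) (t : Tm F) : rename ρ.symm (rename ρ t) = t := by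
  rw [rename, rename, subst_subst]
  have h : (fun n => subst (fun m => (Tm.var (ρ.symm m) : Tm F)) (Tm.var (ρ n)))
      = (Tm.var : ℕ → Tm F) := by
    funext n; simp [subst]
  rw [h, subst_var]

theorem rew_subst {R : TRS F} (σ : Nat → Tm F) {a b : Tm F} (h : Rew R a b) :
    Rew R (subst σ a) (subst σ b) := by
  obtain ⟨p, l, r, τ, hR, h1, h2⟩ := h
  refine ⟨p, l, r, fun n => subst σ (τ n), hR, ?_, ?_⟩
  · rw [← subst_subst]; exact subtermAt_subst h1
  · rw [← subst_subst]; exact replaceAt_subst h2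

theorem simE_subst {B : TRS F} (σ : Nat → Tm F) {a b : Tm F} (h : simE B a b) :
    simE B (subst σ a) (subst σ b) := by
  induction h with
  | rel x y h => exact .rel _ _ (rew_subst σ h)
  | refl x => exact .refl _
  | symm x y _ ih => exact .symm _ _ ih
  | trans x y z _ _ ih1 ih2 => exact .trans _ _ _ ih1 ih2

theorem rewMod_subst {R B : TRS F} (σ : Nat → Tm F) {a b : Tm F} (h : RewMod R B a b) :
    RewMod R B (subst σ a) (subst σ b) := by
  obtain ⟨s', t', h1, h2, h3⟩ := h
  exact ⟨subst σ s', subst σ t', simE_subst σ h1, rew_subst σ h2, simE_subst σ h3⟩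

theorem rtg_rewMod_subst {R B : TRS F} (σ : Nat → Tm F) {a b : Tm F}
    (h : Relation.ReflTransGen (RewMod R B) a b) :
    Relation.ReflTransGen (RewMod R B) (subst σ a) (subst σ b) := by
  induction h with
  | refl => exact .refl
  | tail _ h ih => exact ih.tail (rewMod_subst σ h)

theorem rew_of_rule {R : TRS F} {l r : Tm F} (h : (l, r) ∈ R) : Rew R l r := by
  refine ⟨[], l, r, Tm.var, h, ?_, ?_⟩
  · rw [subst_var, subtermAt]
  · rw [subst_var, replaceAt]

theorem rewMod_of_rew {R B : TRS F} {a b : Tm F} (h : Rew R a b) : RewMod R B a b :=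
  ⟨a, b, .refl a, h, .refl b⟩

theorem nf_rtg {r : Tm F → Tm F → Prop} {a b : Tm F} (ha : NF r a)
    (h : Relation.ReflTransGen r a b) : b = a := by
  rcases h.cases_head with h | ⟨c, hc, -⟩
  · exact h.symm
  · exact absurd hc (ha c)

theorem convMod_of_rewMod {R B : TRS F} {a b : Tm F} (h : RewMod R B a b) :
    ConvMod R B a b := by
  obtain ⟨s', t', h1, h2, h3⟩ := h
  exact .trans (.single (Or.inr (Or.inr h1)))
    (.trans (.single (Or.inl h2)) (.single (Or.inr (Or.inr h3))))

theorem convMod_rtg {R B : TRS F} {a b : Tm F}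
    (h : Relation.ReflTransGen (RewMod R B) a b) : ConvMod R B a b := by
  induction h with
  | refl => exact .refl
  | tail _ h ih => exact ih.trans (convMod_of_rewMod h)

theorem convMod_symm {R B : TRS F} {a b : Tm F} (h : ConvMod R B a b) : ConvMod R B b a :=
  (@Relation.ReflTransGen.symmetric _ (fun a b => Rew R a b ∨ Rew R b a ∨ simE B a b) ⟨
    (fun x y hxy => by
      rcases hxy with h | h | h
      · exact Or.inr (Or.inl h)
      · exact Or.inl h
      · exact Or.inr (Or.inr (.symm _ _ h)))⟩).symm _ _ h

theorem nf_unique {R B : TRS F} (hcr : ChurchRosserMod R B) {a b : Tm F}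
    (ha : NF (RewMod R B) a) (hb : NF (RewMod R B) b) (h : ConvMod R B a b) :
    simE B a b := by
  obtain ⟨u, v, h1, h2, h3⟩ := hcr a b h
  have ha' : NF (Rew R) a := fun c hc => ha c (rewMod_of_rew hc)
  have hb' : NF (Rew R) b := fun c hc => hb c (rewMod_of_rew hc)
  rw [nf_rtg ha' h1, nf_rtg hb' h3] at h2
  exact h2

theorem nf_rename {R B : TRS F} {r : Tm F} (ρ : ℕ ≃ ℕ) (h : NF (RewMod R B) r) :
    NF (RewMod R B) (rename ρ r) := by
  intro c hc
  have := rewMod_subst (fun n => Tm.var (ρ.symm n)) hc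
  rw [show subst (fun n => Tm.var (ρ.symm n)) (rename ρ r) = rename ρ.symm (rename ρ r)
    from rfl, rename_symm_rename] at this
  exact h _ this

theorem key {R B Rdot Rddot : TRS F}
    (hcomp : CompleteMod R B) (hdot : IsRdot R B Rdot)
    (hddot : Rddot = {q ∈ Rdot | NF (Rew (Rdot \ {q})) q.1}) :
    ∀ l r, (l, r) ∈ Rdot → ∃ l' r' p τ, (l', r') ∈ Rddot ∧
      subtermAt l p = some (subst τ l') := by
  suffices h : ∀ N l r, mu l < N → (l, r) ∈ Rdot → ∃ l' r' p τ, (l', r') ∈ Rddot ∧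
      subtermAt l p = some (subst τ l') by
    exact fun l r hlr => h (mu l + 1) l r (by omega) hlr
  intro N
  induction N with
  | zero => intro l r h; omega
  | succ N ih =>
    intro l r hN hlr
    by_cases hmem : (l, r) ∈ Rddot
    · exact ⟨l, r, [], Tm.var, hmem, by rw [subst_var, subtermAt]⟩
    · have hnnf : ¬ NF (Rew (Rdot \ {(l, r)})) l := by
        intro hnf
        exact hmem (hddot ▸ (⟨hlr, hnf⟩ : (l, r) ∈ Rdot ∧ _))
      simp only [NF, not_forall, not_not] at hnnf
      obtain ⟨b, p, l₂, r₂, σ', hmem2, hsub, hrep⟩ := hnnf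
      have hl2dot : (l₂, r₂) ∈ Rdot := hmem2.1
      have hne : (l₂, r₂) ≠ (l, r) := by
        intro hcontra
        exact hmem2.2 (by simp [hcontra])
      rcases enc_dichotomy hsub with hlt | ⟨ρ, hρ⟩
      · obtain ⟨l', r', p', τ, hdd, hsub'⟩ := ih l₂ r₂ (by omega) hl2dot
        refine ⟨l', r', p ++ p', fun n => subst σ' (τ n), hdd, ?_⟩
        have h2 := subtermAt_subst (σ := σ') hsub'
        rw [subst_subst] at h2
        exact subtermAt_append hsub h2
      · -- variant case
        exfalso
        apply hne
        symm
        have hρ' : rename ρ.symm l = l₂ := by rw [← hρ, rename_symm_rename]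
        obtain ⟨r₀, hr₀R, hr₀r, hNFr⟩ := hdot.1 (l, r) hlr
        obtain ⟨r₀', h2R, h2r, hNFr₂⟩ := hdot.1 (l₂, r₂) hl2dot
        have c1 : ConvMod R B (rename ρ.symm r) (rename ρ.symm r₀) :=
          convMod_symm (convMod_rtg (rtg_rewMod_subst _ hr₀r))
        have step : Rew R l₂ (rename ρ.symm r₀) := by
          rw [← hρ']
          exact rew_subst _ (rew_of_rule hr₀R)
        have c2 : ConvMod R B (rename ρ.symm r₀) l₂ :=
          .single (Or.inr (Or.inl step))
        have c3 : ConvMod R B l₂ r₂ :=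
          .trans (.single (Or.inl (rew_of_rule h2R))) (convMod_rtg h2r)
        have hsim : simE B (rename ρ.symm r) r₂ :=
          nf_unique hcomp.2 (nf_rename ρ.symm hNFr) hNFr₂ (c1.trans (c2.trans c3))
        exact hdot.2.2 (l, r) hlr (l₂, r₂) hl2dot ⟨ρ.symm, hρ', hsim⟩

end StmtAux

/-- If `R` is `B`-complete and `Ṙ` is Church–Rosser modulo `B`, then every
normal form of `R̈` is a normal form of `Ṙ`. -/
theorem stmt13 {F : Type} (R B Rdot Rddot : TRS F) (hTRS : IsTRS R)
    (hcomp : CompleteMod R B)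
    (hdot : IsRdot R B Rdot)
    (hcr : ChurchRosserMod Rdot B)
    (hddot : Rddot = {q ∈ Rdot | NF (Rew (Rdot \ {q})) q.1}) :
    ∀ t, NF (Rew Rddot) t → NF (Rew Rdot) t := by
  intro t hNF u hRew
  obtain ⟨p, l, r, σ, hlr, hsub, hrep⟩ := hRew
  obtain ⟨l', r', p', τ, hdd, hsub'⟩ := StmtAux.key hcomp hdot hddot l r hlr
  have h1 : subtermAt t (p ++ p') = some (subst σ (subst τ l')) :=
    StmtAux.subtermAt_append hsub (StmtAux.subtermAt_subst hsub')
  rw [StmtAux.subst_subst] at h1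
  obtain ⟨u', hu'⟩ := StmtAux.replaceAt_isSome (subst (fun n => subst σ (τ n)) r') h1
  exact hNF u' ⟨p ++ p', l', r', fun n => subst σ (τ n), hdd, h1, hu'⟩
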